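/- For every ε ∈ ℂ the element v_ε = ( !![0,ε; 0,0], !![0,ε; 0,0] ) lies in Z, and for all nonzero ε, ε' ∈ ℂ there exists h ∈ H with h · v_ε = v_{ε'}; that is, all the points v_ε with ε ≠ 0 lie in a single H-orbit. -/

import Mathlib

open Matrix

/-- The matrix `J = !![0,-1; 1,0]`. -/
def MJ : Matrix (Fin 2) (Fin 2) ℂ := !![0, -1; 1, 0]

/-- The matrix `T = !![0,1; 1,0]`. -/
def MT : Matrix (Fin 2) (Fin 2) ℂ := !![0, 1; 1, 0]

/-- The variety `Z` of pairs of 2×2 matrices. -/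
def Z : Set (Matrix (Fin 2) (Fin 2) ℂ × Matrix (Fin 2) (Fin 2) ℂ) :=
  {p | p.1.det = 0 ∧ p.2.det = 0 ∧ p.1 * MJ * p.2ᵀ = 0 ∧ p.2ᵀ * MT * p.1 = 0}

/-- For `g = !![a,b; c,d]` with determinant `Δ`, `g* = Δ⁻¹ • !![a,-b; -c,d]`. -/
noncomputable def gstar (g : Matrix (Fin 2) (Fin 2) ℂ) : Matrix (Fin 2) (Fin 2) ℂ :=
  (g.det)⁻¹ • !![g 0 0, -(g 0 1); -(g 1 0), g 1 1]

/-- The group `H = SL₂(ℂ) × GL₂(ℂ) × ℂˣ`. -/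
abbrev H := Matrix.SpecialLinearGroup (Fin 2) ℂ × GL (Fin 2) ℂ × ℂˣ

/-- The action `(h₁,h₂,z)·(B₁,B₂) = (z · h₂* · B₁ · h₁⁻¹, h₂ · B₂ · h₁⁻¹)`. -/
noncomputable def act (h : H) (v : Matrix (Fin 2) (Fin 2) ℂ × Matrix (Fin 2) (Fin 2) ℂ) :
    Matrix (Fin 2) (Fin 2) ℂ × Matrix (Fin 2) (Fin 2) ℂ :=
  ((h.2.2 : ℂ) • (gstar (h.2.1 : Matrix (Fin 2) (Fin 2) ℂ) * v.1 *
      ((h.1⁻¹ : Matrix.SpecialLinearGroup (Fin 2) ℂ) : Matrix (Fin 2) (Fin 2) ℂ)),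
    (h.2.1 : Matrix (Fin 2) (Fin 2) ℂ) * v.2 *
      ((h.1⁻¹ : Matrix.SpecialLinearGroup (Fin 2) ℂ) : Matrix (Fin 2) (Fin 2) ℂ))

/-- The element `v_ε = ( !![0,ε; 0,0], !![0,ε; 0,0] )`. -/
def veps (ε : ℂ) : Matrix (Fin 2) (Fin 2) ℂ × Matrix (Fin 2) (Fin 2) ℂ :=
  (!![0, ε; 0, 0], !![0, ε; 0, 0])

/-! For `a ≠ 0`, the element
`(1, diag(a, 1), a)` of `H` sends `v_ε` to `v_{aε}`: `diag(a, 1)` rescales the top row of `B₂` by `a`,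
while `diag(a, 1)* = diag(1, a⁻¹)` fixes `B₁`, whose only nonzero row is the top one, and the scalar
`a` then rescales it. Taking `a = ε' / ε` gives the orbit statement. -/

theorem Matrix.transpose_fin_two_of {α : Type*} (a b c d : α) :
    !![a, b; c, d]ᵀ = !![a, c; b, d] := by
  ext i j; fin_cases i <;> fin_cases j <;> rfl

theorem veps_mem_Z (ε : ℂ) : veps ε ∈ Z := by
  simp [Z, veps, MJ, MT, transpose_fin_two_of, ← of_zero, ← cons_zero_zero]

theorem gstar_diag {a b : ℂ} (ha : a ≠ 0) (hb : b ≠ 0) :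
    gstar !![a, 0; 0, b] = !![b⁻¹, 0; 0, a⁻¹] := by
  simp [gstar, det_fin_two_of, ha, hb, mul_comm]

theorem act_one_diag_veps (a : ℂˣ) (ε : ℂ) :
    act (1, GeneralLinearGroup.mkOfDetNeZero !![(a : ℂ), 0; 0, 1] (by simp [det_fin_two_of]), a)
      (veps ε) = veps (a * ε) := by
  simp [act, veps, gstar_diag, GeneralLinearGroup.mkOfDetNeZero]

theorem stmt4 :
    (∀ ε : ℂ, veps ε ∈ Z) ∧
    (∀ ε ε' : ℂ, ε ≠ 0 → ε' ≠ 0 → ∃ h : H, act h (veps ε) = veps ε') := by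
  refine ⟨veps_mem_Z, fun ε ε' hε hε' => ?_⟩
  let a : ℂˣ := Units.mk0 (ε' / ε) (div_ne_zero hε' hε)
  refine ⟨_, (act_one_diag_veps a ε).trans ?_⟩
  rw [Units.val_mk0, div_mul_cancel₀ ε' hε]
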